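/- Fix a Lyndon word λ with r = |λ| and an integer E ≥ 4. Let R = run(λ,e,α,β) with 2 ≤ e ≤ E and 0 ≤ α, β < r. Define the finite set of points h(R) ⊆ ℤ≥0² by: h(R) = ∅ if e < E−2; h(R) = {(α,β)} if e = E−2; h(R) = {(r+α, β), (α, r+β)} if e = E−1; h(R) = {(2r−1, β), (α, 2r−1), (r+α, r+β)} if e = E. For a point p = (x,y) with 0 ≤ x,y ≤ 2r−1, define g(p) = run(λ, e', x mod r, y mod r), where e' = E if x ≥ r and y ≥ r; e' = E−1 if exactly one of x ≥ r and y ≥ r holds; and e' = E−2 if x < r and y < r. Then for every point p = (x,y) with 0 ≤ x,y ≤ 2r−1: p lies in the primary skyline of h(R) if and only if g(p) is a unique substring of R, i.e., |Occ(g(p),R)| = 1. -/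

import Mathlib

/-- `e`-fold concatenation of the string `l` with itself. -/
def listPow {α : Type*} (l : List α) : ℕ → List α
  | 0 => []
  | n + 1 => l ++ listPow l n

/-- `run λ e α β = P · λ^e · T` where `P` is the suffix of `λ` of length `α`
and `T` is the prefix of `λ` of length `β`. -/
def runWord {α : Type*} (lam : List α) (e a b : ℕ) : List α :=
  lam.drop (lam.length - a) ++ listPow lam e ++ lam.take b

/-- The set of occurrences of `F` in `F'`: positions `i` with
`0 ≤ i ≤ |F'| − |F|` and `F = F'[i..i+|F|)`. -/
def occ {α : Type*} [DecidableEq α] (F F' : List α) : Finset ℕ :=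
  (Finset.range (F'.length + 1)).filter
    (fun i => i + F.length ≤ F'.length ∧ (F'.drop i).take F.length = F)

/-- A Lyndon word: a nonempty string lexicographically strictly smaller than
every proper nonempty suffix of itself. -/
def IsLyndon {α : Type*} [LinearOrder α] (l : List α) : Prop :=
  l ≠ [] ∧ ∀ i, 0 < i → i < l.length → l < l.drop i

/-- `z` is dominated by `p` (in `ℤ≥0²`, modeled as `ℕ × ℕ`). -/
def Dominated (z p : ℕ × ℕ) : Prop := z.1 ≤ p.1 ∧ z.2 ≤ p.2

instance (z p : ℕ × ℕ) : Decidable (Dominated z p) := instDecidableAnd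

/-- Membership of a point in the primary skyline of a finite set of points:
the point is dominated by exactly one element of `P`. -/
def InPrimarySkyline (P : Finset (ℕ × ℕ)) (z : ℕ × ℕ) : Prop :=
  (P.filter (fun p => Dominated z p)).card = 1

lemma listPow_length {α : Type*} (l : List α) (n : ℕ) :
    (listPow l n).length = n * l.length := by
  induction n with
  | zero => simp [listPow]
  | succ n ih => simp [listPow, ih]; ring

lemma listPow_getElem? {α : Type*} (l : List α) (n k : ℕ) (h : k < n * l.length) :
    (listPow l n)[k]? = l[k % l.length]? := by
  induction n generalizing k with
  | zero => simp at h
  | succ n ih =>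
    have hmul : (n + 1) * l.length = n * l.length + l.length := by ring
    have hl : 0 < l.length := by
      rcases Nat.eq_zero_or_pos l.length with h0 | h0
      · rw [h0] at h; simp at h
      · exact h0
    simp only [listPow, List.getElem?_append]
    by_cases hk : k < l.length
    · simp [hk, Nat.mod_eq_of_lt hk]
    · push_neg at hk
      rw [if_neg (by omega)]
      rw [ih (k - l.length) (by omega)]
      congr 1
      conv_rhs => rw [show k = k - l.length + l.length by omega]
      rw [Nat.add_mod_right]

lemma runWord_length {α : Type*} (l : List α) (e a b : ℕ)
    (ha : a ≤ l.length) (hb : b ≤ l.length) :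
    (runWord l e a b).length = a + e * l.length + b := by
  simp [runWord, listPow_length]
  omega

lemma runWord_getElem? {α : Type*} (l : List α) (e a b k : ℕ)
    (ha : a ≤ l.length) (hb : b ≤ l.length) (hk : k < a + e * l.length + b) :
    (runWord l e a b)[k]? = l[(k + (l.length - a)) % l.length]? := by
  have hl : 0 < l.length := by
    rcases Nat.eq_zero_or_pos l.length with h0 | h0
    · rw [h0] at ha hb hk; simp at hk; omega
    · exact h0
  have hmul : (e + 1) * l.length = e * l.length + l.length := by ring
  simp only [runWord, List.getElem?_append, List.length_append, List.length_drop,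
    listPow_length, Nat.sub_sub_self ha]
  by_cases h1 : k < a
  · rw [if_pos (by omega), if_pos (by omega), List.getElem?_drop]
    congr 1
    rw [Nat.mod_eq_of_lt (by omega)]
    omega
  · push_neg at h1
    by_cases h2 : k < a + e * l.length
    · rw [if_pos (by omega), if_neg (by omega)]
      rw [listPow_getElem? _ _ _ (by omega)]
      congr 1
      conv_rhs => rw [show k + (l.length - a) = (k - a) + l.length by omega]
      rw [Nat.add_mod_right]
    · push_neg at h2
      rw [if_neg (by omega)]
      rw [List.getElem?_take, if_pos (by omega)]
      congr 1
      rw [show k + (l.length - a) = (k - (a + e * l.length)) + (e + 1) * l.length by omega]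
      rw [Nat.add_mul_mod_self_right, Nat.mod_eq_of_lt (by omega)]

lemma mem_occ_iff {α : Type*} [DecidableEq α] (F F' : List α) (i : ℕ) :
    i ∈ occ F F' ↔ i + F.length ≤ F'.length ∧ ∀ k < F.length, F'[i + k]? = F[k]? := by
  simp only [occ, Finset.mem_filter, Finset.mem_range]
  constructor
  · rintro ⟨hi, hle, heq⟩
    refine ⟨hle, fun k hk => ?_⟩
    have := congrArg (fun l => l[k]?) heq
    simpa [List.getElem?_take, hk, List.getElem?_drop] using this
  · rintro ⟨hle, hptw⟩
    refine ⟨by omega, hle, ?_⟩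
    apply List.ext_getElem?
    intro n
    rw [List.getElem?_take]
    split
    · rw [List.getElem?_drop]
      exact hptw n (by assumption)
    · rw [eq_comm, List.getElem?_eq_none]
      omega

lemma not_append_lt {α : Type*} [LinearOrder α] (u w : List α) : ¬ (u ++ w < u) := by
  induction u with
  | nil =>
    intro h
    have h' : List.Lex (· < ·) ([] ++ w) [] := h
    exact List.not_lex_nil h'
  | cons a u ih =>
    intro h
    have h' : List.Lex (· < ·) (a :: (u ++ w)) (a :: u) := h
    cases h' with
    | cons h'' => exact ih h''
    | rel h'' => exact lt_irrefl a h''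

lemma lyndon_no_rot {α : Type*} [LinearOrder α] (l : List α) (hl : IsLyndon l)
    (d : ℕ) (hd0 : 0 < d) (hdr : d < l.length)
    (hrot : ∀ t < l.length, l[t]? = l[(t + d) % l.length]?) : False := by
  have key : l = l.drop d ++ l.take d := by
    apply List.ext_getElem?
    intro n
    rw [List.getElem?_append]
    by_cases h1 : n < l.length - d
    · rw [if_pos (by simp; omega), List.getElem?_drop]
      rw [hrot n (by omega), Nat.mod_eq_of_lt (by omega)]
      congr 1
      omega
    · by_cases h2 : n < l.length
      · rw [if_neg (by simp; omega), List.getElem?_take,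
          if_pos (by simp; omega)]
        rw [hrot n h2]
        congr 1
        rw [show n + d = (n - (l.length - d) + l.length) by omega,
          Nat.add_mod_right, Nat.mod_eq_of_lt (by omega)]
        simp
      · rw [List.getElem?_eq_none (by omega), if_neg (by simp; omega),
          List.getElem?_take, if_neg (by simp; omega)]
  have hlt : l < l.drop d := hl.2 d hd0 hdr
  nth_rewrite 1 [key] at hlt
  exact not_append_lt _ _ hlt

lemma occ_card {α : Type*} [LinearOrder α] (lam : List α) (hlyn : IsLyndon lam)
    (e a b e' x' y' : ℕ) (he' : 2 ≤ e')
    (ha : a < lam.length) (hb : b < lam.length)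
    (hx' : x' < lam.length) (hy' : y' < lam.length) :
    (occ (runWord lam e' x' y') (runWord lam e a b)).card
      = e + 1 - (e' + (if b < y' then 1 else 0)) - (if a < x' then 1 else 0) := by
  have hr0 : 0 < lam.length := List.length_pos_iff.mpr hlyn.1
  have hG : (runWord lam e' x' y').length = x' + e' * lam.length + y' :=
    runWord_length _ _ _ _ (by omega) (by omega)
  have hRl : (runWord lam e a b).length = a + e * lam.length + b :=
    runWord_length _ _ _ _ (by omega) (by omega)
  have key : occ (runWord lam e' x' y') (runWord lam e a b)
      = ((Finset.range (e + 1)).filter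
          (fun j => x' ≤ a + j * lam.length ∧
            j + e' + (if b < y' then 1 else 0) ≤ e)).image
          (fun j => a + j * lam.length - x') := by
    ext i
    rw [mem_occ_iff, hG, hRl]
    simp only [Finset.mem_image, Finset.mem_filter, Finset.mem_range]
    constructor
    · rintro ⟨hle, hptw⟩
      have hc : (i + x' + (lam.length - a)) % lam.length = 0 := by
        by_contra hc0
        apply lyndon_no_rot lam hlyn ((i + x' + (lam.length - a)) % lam.length)
          (Nat.pos_of_ne_zero hc0) (Nat.mod_lt _ hr0)
        intro t ht
        have h1r : 1 * lam.length ≤ e' * lam.length :=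
          Nat.mul_le_mul_right _ (by omega)
        have h2 := hptw (x' + t) (by omega)
        rw [runWord_getElem? lam e a b _ (by omega) (by omega) (by omega),
          runWord_getElem? lam e' x' y' _ (by omega) (by omega) (by omega)] at h2
        rw [show x' + t + (lam.length - x') = t + lam.length by omega,
          Nat.add_mod_right, Nat.mod_eq_of_lt ht] at h2
        rw [← h2]
        congr 1
        rw [show i + (x' + t) + (lam.length - a) = t + (i + x' + (lam.length - a)) by omega]
        exact (Nat.add_mod_mod _ _ _).symm
      obtain ⟨q, hq⟩ : lam.length ∣ (i + x' + (lam.length - a)) :=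
        Nat.dvd_of_mod_eq_zero hc
      have hq1 : 1 ≤ q := by
        rcases Nat.eq_zero_or_pos q with h0 | h0
        · rw [h0] at hq; omega
        · exact h0
      have hsub : (q - 1) * lam.length = q * lam.length - lam.length := by
        rw [Nat.sub_mul, Nat.one_mul]
      have hcomm : lam.length * q = q * lam.length := Nat.mul_comm _ _
      have h1q : 1 * lam.length ≤ q * lam.length := Nat.mul_le_mul_right _ hq1
      have hij : i + x' = a + (q - 1) * lam.length := by omega
      have hlen : (q - 1) * lam.length + e' * lam.length + y' ≤ e * lam.length + b := by
        omega
      have hje : q - 1 + e' ≤ e := by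
        by_contra hcon
        push_neg at hcon
        have h1 : (e + 1) * lam.length ≤ (q - 1 + e') * lam.length :=
          Nat.mul_le_mul_right _ (by omega)
        have h2 : (q - 1 + e') * lam.length = (q - 1) * lam.length + e' * lam.length := by
          ring
        have h3 : (e + 1) * lam.length = e * lam.length + lam.length := by ring
        omega
      refine ⟨q - 1, ⟨by omega, by omega, ?_⟩, by omega⟩
      by_cases hby : b < y'
      · rw [if_pos hby]
        by_contra hcon
        push_neg at hcon
        have hqe : q - 1 + e' = e := by omega
        have h2 : (q - 1 + e') * lam.length = (q - 1) * lam.length + e' * lam.length := by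
          ring
        have h3 : (q - 1 + e') * lam.length = e * lam.length := by rw [hqe]
        omega
      · rw [if_neg hby]; exact hje
    · rintro ⟨j, ⟨hjr, hjx, hjcond⟩, rfl⟩
      have hlen : j * lam.length + e' * lam.length + y' ≤ e * lam.length + b := by
        by_cases hby : b < y'
        · rw [if_pos hby] at hjcond
          have h1 : (j + e' + 1) * lam.length ≤ e * lam.length :=
            Nat.mul_le_mul_right _ (by omega)
          have h2 : (j + e' + 1) * lam.length
              = j * lam.length + e' * lam.length + lam.length := by ring
          omega
        · rw [if_neg hby] at hjcond
          have h1 : (j + e') * lam.length ≤ e * lam.length :=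
            Nat.mul_le_mul_right _ (by omega)
          have h2 : (j + e') * lam.length = j * lam.length + e' * lam.length := by ring
          omega
      refine ⟨by omega, fun k hk => ?_⟩
      rw [runWord_getElem? lam e a b _ (by omega) (by omega) (by omega),
        runWord_getElem? lam e' x' y' _ (by omega) (by omega) (by omega)]
      congr 1
      rw [show a + j * lam.length - x' + k + (lam.length - a)
          = (k + (lam.length - x')) + j * lam.length by omega,
        Nat.add_mul_mod_self_right]
  rw [key]
  have hinj : Set.InjOn (fun j => a + j * lam.length - x')
      ↑((Finset.range (e + 1)).filter
        (fun j => x' ≤ a + j * lam.length ∧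
          j + e' + (if b < y' then 1 else 0) ≤ e)) := by
    intro j₁ h₁ j₂ h₂ hf
    simp only [Finset.mem_coe, Finset.mem_filter, Finset.mem_range] at h₁ h₂
    have hf' : a + j₁ * lam.length - x' = a + j₂ * lam.length - x' := hf
    have h3 : j₁ * lam.length = j₂ * lam.length := by omega
    exact Nat.eq_of_mul_eq_mul_right hr0 h3
  rw [Finset.card_image_of_injOn hinj]
  have hset : (Finset.range (e + 1)).filter
      (fun j => x' ≤ a + j * lam.length ∧
        j + e' + (if b < y' then 1 else 0) ≤ e)
      = Finset.Ico (if a < x' then 1 else 0)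
          (e + 1 - (e' + (if b < y' then 1 else 0))) := by
    ext j
    simp only [Finset.mem_filter, Finset.mem_range, Finset.mem_Ico]
    constructor
    · rintro ⟨hj, hjx, hjc⟩
      refine ⟨?_, by omega⟩
      by_cases hax : a < x'
      · rw [if_pos hax]
        rcases Nat.eq_zero_or_pos j with h0 | h0
        · rw [h0] at hjx; omega
        · omega
      · rw [if_neg hax]; omega
    · rintro ⟨hj1, hj2⟩
      refine ⟨by omega, ?_, by omega⟩
      by_cases hax : a < x'
      · rw [if_pos hax] at hj1
        have := Nat.mul_le_mul_right lam.length hj1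
        omega
      · omega
  rw [hset, Nat.card_Ico]

lemma dominated_iff (z p : ℕ × ℕ) : Dominated z p ↔ z.1 ≤ p.1 ∧ z.2 ≤ p.2 := Iff.rfl

lemma filter_card_one (z p : ℕ × ℕ) :
    (({p} : Finset (ℕ × ℕ)).filter (fun w => Dominated z w)).card
      = if Dominated z p then 1 else 0 := by
  rw [Finset.filter_singleton]
  split_ifs <;> simp

lemma filter_card_pair (z p q : ℕ × ℕ) (hpq : p ≠ q) :
    (({p, q} : Finset (ℕ × ℕ)).filter (fun w => Dominated z w)).card
      = (if Dominated z p then 1 else 0) + (if Dominated z q then 1 else 0) := by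
  rw [Finset.filter_insert, Finset.filter_singleton]
  split_ifs <;> simp_all [Finset.card_insert_of_notMem]

lemma filter_card_triple (z p q s : ℕ × ℕ) (hpq : p ≠ q) (hps : p ≠ s) (hqs : q ≠ s) :
    (({p, q, s} : Finset (ℕ × ℕ)).filter (fun w => Dominated z w)).card
      = (if Dominated z p then 1 else 0) + (if Dominated z q then 1 else 0)
        + (if Dominated z s then 1 else 0) := by
  rw [Finset.filter_insert, Finset.filter_insert, Finset.filter_singleton]
  split_ifs <;> simp_all [Finset.card_insert_of_notMem]

set_option maxHeartbeats 2000000 in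
theorem run_skyline_iff_unique {α : Type*} [LinearOrder α]
    (lam : List α) (hlyn : IsLyndon lam) (r : ℕ) (hr : r = lam.length)
    (E : ℕ) (hE : 4 ≤ E)
    (e a b : ℕ) (he2 : 2 ≤ e) (heE : e ≤ E) (ha : a < r) (hb : b < r)
    (hR : Finset (ℕ × ℕ))
    (hhR : hR = if e + 2 < E then (∅ : Finset (ℕ × ℕ))
      else if e + 2 = E then {(a, b)}
      else if e + 1 = E then {(r + a, b), (a, r + b)}
      else {(2 * r - 1, b), (a, 2 * r - 1), (r + a, r + b)})
    (x y : ℕ) (hx : x ≤ 2 * r - 1) (hy : y ≤ 2 * r - 1)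
    (e' : ℕ)
    (he' : e' = if r ≤ x ∧ r ≤ y then E
      else if r ≤ x ∨ r ≤ y then E - 1
      else E - 2) :
    InPrimarySkyline hR (x, y) ↔
      (occ (runWord lam e' (x % r) (y % r)) (runWord lam e a b)).card = 1 := by
  subst hr
  subst hhR
  have hr0 : 0 < lam.length := List.length_pos_iff.mpr hlyn.1
  have hx' : x % lam.length < lam.length := Nat.mod_lt _ hr0
  have hy' : y % lam.length < lam.length := Nat.mod_lt _ hr0
  have he'2 : 2 ≤ e' := by rw [he']; split_ifs <;> (try simp only [false_iff, true_iff, iff_false, iff_true]) <;> omega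
  rw [InPrimarySkyline, occ_card lam hlyn e a b e' _ _ he'2 ha hb hx' hy']
  have hxv : x % lam.length = if lam.length ≤ x then x - lam.length else x := by
    split_ifs with h
    · rw [Nat.mod_eq_sub_mod h, Nat.mod_eq_of_lt (by omega)]
    · exact Nat.mod_eq_of_lt (by omega)
  have hyv : y % lam.length = if lam.length ≤ y then y - lam.length else y := by
    split_ifs with h
    · rw [Nat.mod_eq_sub_mod h, Nat.mod_eq_of_lt (by omega)]
    · exact Nat.mod_eq_of_lt (by omega)
  by_cases hxr : lam.length ≤ x <;> by_cases hyr : lam.length ≤ y <;>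
    [(rw [if_pos hxr] at hxv; rw [if_pos hyr] at hyv;
      rw [if_pos ⟨hxr, hyr⟩] at he');
     (rw [if_pos hxr] at hxv; rw [if_neg hyr] at hyv;
      rw [if_neg (by tauto), if_pos (Or.inl hxr)] at he');
     (rw [if_neg hxr] at hxv; rw [if_pos hyr] at hyv;
      rw [if_neg (by tauto), if_pos (Or.inr hyr)] at he');
     (rw [if_neg hxr] at hxv; rw [if_neg hyr] at hyv;
      rw [if_neg (by tauto), if_neg (by tauto)] at he')] <;>
  rw [hxv, hyv, he'] <;>
  clear hxv hyv he' he'2 hx' hy' <;>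
  [skip; skip; skip; skip] <;>
  (by_cases hc1 : e + 2 < E
   · rw [if_pos hc1]
     simp only [Finset.filter_empty, Finset.card_empty]
     omega
   · rw [if_neg hc1]
     by_cases hc2 : e + 2 = E
     · rw [if_pos hc2, filter_card_one]
       simp only [dominated_iff]
       split_ifs <;> (try simp only [false_iff, true_iff, iff_false, iff_true]) <;> omega
     · rw [if_neg hc2]
       by_cases hc3 : e + 1 = E
       · rw [if_pos hc3,
           filter_card_pair _ _ _ (by intro hcon; rw [Prod.mk.injEq] at hcon; omega)]
         simp only [dominated_iff]
         split_ifs <;> (try simp only [false_iff, true_iff, iff_false, iff_true]) <;> omega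
       · rw [if_neg hc3,
           filter_card_triple _ _ _ _
             (by intro hcon; rw [Prod.mk.injEq] at hcon; omega)
             (by intro hcon; rw [Prod.mk.injEq] at hcon; omega)
             (by intro hcon; rw [Prod.mk.injEq] at hcon; omega)]
         simp only [dominated_iff]
         split_ifs <;> (try simp only [false_iff, true_iff, iff_false, iff_true]) <;> omega)
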